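/- Let φ : ℝⁿ → [0,∞) be a G-function and let u ∈ W^{1,φ}_T([0,T], ℝⁿ), i.e., u is absolutely continuous with u(0) = u(T). Write ū = (1/T)∫₀ᵀ u and ũ = u − ū. Then for every t ∈ [0,T], φ(ũ(t)) ≤ (1/T) ∫₀ᵀ φ(T u′(r)) dr. -/

import Mathlib

open MeasureTheory Set intervalIntegral

/-- `φ` is a G-function. -/
structure IsGFunction {n : ℕ} (φ : EuclideanSpace ℝ (Fin n) → ℝ) : Prop where
  nonneg : ∀ x, 0 ≤ φ x
  convexOn : ConvexOn ℝ Set.univ φ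
  even : ∀ x, φ (-x) = φ x
  lsc : LowerSemicontinuous φ
  zero : φ 0 = 0
  bddNearZero : ∃ ε > (0:ℝ), ∃ M : ℝ, ∀ x, ‖x‖ < ε → φ x ≤ M
  tendsto_infty : ∀ M : ℝ, ∃ R : ℝ, ∀ x, R < ‖x‖ → M ≤ φ x

/-!
Fubini gives `∫₀ᵀ u = T u(0) + ∫₀ᵀ (T - r) u'(r) dr`, which writes the deviation from the mean
as an average `u(t) - ū = ⨍_{(0,T]} k_t(r) u'(r) dr` with kernel `k_t(r) = r` for `r ≤ t` and
`k_t(r) = r - T` for `r > t`. Since `|k_t| ≤ T`, convexity and evenness of `φ` give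
`φ (k_t(r) u'(r)) ≤ φ (T u'(r))`, and Jensen's inequality for this average concludes.
-/

theorem IntervalIntegrable.indicator {E : Type*} [NormedAddCommGroup E] {f : ℝ → E}
    {μ : Measure ℝ} {a b : ℝ} {s : Set ℝ} (hf : IntervalIntegrable f μ a b) (hs : MeasurableSet s) :
    IntervalIntegrable (s.indicator f) μ a b :=
  intervalIntegrable_iff.2 ((intervalIntegrable_iff.1 hf).indicator hs)

theorem ConvexOn.apply_smul_le_of_abs_le_one {F : Type*} [AddCommGroup F] [Module ℝ F] {g : F → ℝ}
    (hg : ConvexOn ℝ univ g) (heven : ∀ x, g (-x) = g x) {a : ℝ} (ha : |a| ≤ 1) (x : F) :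
    g (a • x) ≤ g x := by
  obtain ⟨ha₁, ha₂⟩ := abs_le.1 ha
  have hcomb : ((1 + a) / 2) • x + ((1 - a) / 2) • -x = a • x := by
    rw [smul_neg, ← sub_eq_add_neg, ← sub_smul]
    ring_nf
  calc g (a • x) ≤ (1 + a) / 2 * g x + (1 - a) / 2 * g (-x) :=
        hcomb ▸ hg.2 (mem_univ x) (mem_univ (-x)) (by linarith) (by linarith) (by ring)
    _ = g x := by rw [heven]; ring

variable {E : Type*} [NormedAddCommGroup E] [NormedSpace ℝ E]

theorem ConvexOn.ofReal_map_set_average_le [CompleteSpace E] {α : Type*} [MeasurableSpace α]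
    {μ : Measure α} {s : Set α} {g : E → ℝ} (hg : ConvexOn ℝ univ g) (hgc : Continuous g)
    (hg₀ : ∀ x, 0 ≤ g x) (h₀ : μ s ≠ 0) (hs : μ s ≠ ⊤) {f : α → E} (hf : IntegrableOn f s μ) :
    ENNReal.ofReal (g (⨍ x in s, f x ∂μ)) ≤ (μ s)⁻¹ * ∫⁻ x in s, ENNReal.ofReal (g (f x)) ∂μ := by
  by_cases hfin : ∫⁻ x in s, ENNReal.ofReal (g (f x)) ∂μ = ⊤
  · rw [hfin, ENNReal.mul_top (ENNReal.inv_ne_zero.2 hs)]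
    exact le_top
  have hgf : IntegrableOn (fun x ↦ g (f x)) s μ :=
    ⟨hgc.comp_aestronglyMeasurable hf.1,
      (hasFiniteIntegral_iff_ofReal (ae_of_all _ fun x ↦ hg₀ (f x))).2 (lt_top_iff_ne_top.2 hfin)⟩
  calc ENNReal.ofReal (g (⨍ x in s, f x ∂μ)) ≤ ENNReal.ofReal (⨍ x in s, g (f x) ∂μ) :=
        ENNReal.ofReal_le_ofReal <| hg.map_set_average_le hgc.continuousOn isClosed_univ h₀ hs
          (ae_of_all _ fun _ ↦ mem_univ _) hf hgf
    _ = (μ s)⁻¹ * ∫⁻ x in s, ENNReal.ofReal (g (f x)) ∂μ := by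
        rw [setAverage_eq, smul_eq_mul, ENNReal.ofReal_mul (by positivity),
          ofReal_integral_eq_lintegral_ofReal hgf (ae_of_all _ fun x ↦ hg₀ (f x)), measureReal_def,
          ENNReal.ofReal_inv_of_pos (ENNReal.toReal_pos h₀ hs), ENNReal.ofReal_toReal hs]

theorem intervalIntegral.integral_primitive_eq_integral_sub_smul [CompleteSpace E]
    {f : ℝ → E} {a b : ℝ} (hab : a ≤ b) (hf : IntervalIntegrable f volume a b) :
    ∫ s in a..b, ∫ r in a..s, f r = ∫ r in a..b, (b - r) • f r := by
  set μ := volume.restrict (Ioc a b)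
  let F : ℝ × ℝ → E := {p | p.2 ≤ p.1}.indicator fun p ↦ f p.2
  have hF : Integrable F (μ.prod μ) :=
    (((intervalIntegrable_iff_integrableOn_Ioc_of_le hab).1 hf).comp_snd μ).indicator
      (measurableSet_le measurable_snd measurable_fst)
  have hinner_left : ∀ s ∈ Ioc a b, ∫ r, F (s, r) ∂μ = ∫ r in a..s, f r := by
    intro s hs
    change ∫ r, (Iic s).indicator f r ∂μ = _
    rw [MeasureTheory.integral_indicator measurableSet_Iic,
      Measure.restrict_restrict measurableSet_Iic, Iic_inter_Ioc_of_le hs.2, integral_of_le hs.1.le]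
  have hinner_right : ∀ r ∈ Ioc a b, ∫ s, F (s, r) ∂μ = (b - r) • f r := by
    intro r hr
    have hset : Ici r ∩ Ioc a b = Icc r b := by
      ext s; simp only [mem_inter_iff, mem_Ici, mem_Ioc, mem_Icc]
      exact ⟨fun h ↦ ⟨h.1, h.2.2⟩, fun h ↦ ⟨h.1, hr.1.trans_le h.1, h.2⟩⟩
    change ∫ s, (Ici r).indicator (fun _ ↦ f r) s ∂μ = _
    rw [MeasureTheory.integral_indicator_const _ measurableSet_Ici,
      measureReal_restrict_apply measurableSet_Ici, hset, Real.volume_real_Icc_of_le hr.2]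
  calc ∫ s in a..b, ∫ r in a..s, f r = ∫ s, ∫ r, F (s, r) ∂μ ∂μ := by
        rw [integral_of_le hab]
        exact setIntegral_congr_fun measurableSet_Ioc fun s hs ↦ (hinner_left s hs).symm
    _ = ∫ r, ∫ s, F (s, r) ∂μ ∂μ := integral_integral_swap hF
    _ = ∫ r in a..b, (b - r) • f r := by
        rw [integral_of_le hab]
        exact setIntegral_congr_fun measurableSet_Ioc hinner_right

noncomputable def meanDeviationKernel (T t r : ℝ) : ℝ := if r ≤ t then r else r - T

theorem abs_meanDeviationKernel_le {T t r : ℝ} (hr : r ∈ Ioc 0 T) :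
    |meanDeviationKernel T t r| ≤ T := by
  unfold meanDeviationKernel
  split_ifs
  · rw [abs_of_pos hr.1]; exact hr.2
  · rw [abs_le]; constructor <;> linarith [hr.1, hr.2]

theorem meanDeviationKernel_smul_eq (T t : ℝ) (f : ℝ → E) :
    (fun r ↦ meanDeviationKernel T t r • f r) =
      fun r ↦ T • (Iic t).indicator f r - (T - r) • f r := by
  ext r
  by_cases h : r ≤ t <;> simp [meanDeviationKernel, h, sub_smul]

theorem IntervalIntegrable.meanDeviationKernel_smul {f : ℝ → E} {a b : ℝ}
    (hf : IntervalIntegrable f volume a b) (T t : ℝ) :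
    IntervalIntegrable (fun r ↦ meanDeviationKernel T t r • f r) volume a b := by
  rw [meanDeviationKernel_smul_eq]
  refine IntervalIntegrable.sub ?_ (hf.continuousOn_smul (by fun_prop))
  exact (hf.indicator measurableSet_Iic).smul T

theorem sub_average_eq_integral_meanDeviationKernel_smul [CompleteSpace E] {T : ℝ} (hT : 0 < T)
    {u u' : ℝ → E} (hu' : IntervalIntegrable u' volume 0 T)
    (hu : ∀ t ∈ Icc 0 T, u t = u 0 + ∫ s in 0..t, u' s)
    {t : ℝ} (ht : t ∈ Icc 0 T) :
    u t - T⁻¹ • ∫ s in 0..T, u s = T⁻¹ • ∫ r in 0..T, meanDeviationKernel T t r • u' r := by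
  have hmean : ∫ s in 0..T, u s = T • u 0 + ∫ r in 0..T, (T - r) • u' r := by
    have hprim : IntervalIntegrable (fun s ↦ ∫ r in 0..s, u' r) volume 0 T :=
      (continuousOn_primitive_interval' hu' left_mem_uIcc).intervalIntegrable
    calc ∫ s in 0..T, u s = ∫ s in 0..T, (u 0 + ∫ r in 0..s, u' r) :=
          integral_congr fun s hs ↦ hu s (uIcc_of_le hT.le ▸ hs)
      _ = T • u 0 + ∫ r in 0..T, (T - r) • u' r := by
          rw [intervalIntegral.integral_add intervalIntegrable_const hprim,
            intervalIntegral.integral_const,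
            integral_primitive_eq_integral_sub_smul hT.le hu', sub_zero]
  have hindicator : ∫ r in 0..T, (Iic t).indicator u' r = ∫ r in 0..t, u' r := by
    rw [integral_of_le hT.le, integral_of_le ht.1,
      MeasureTheory.integral_indicator measurableSet_Iic, Measure.restrict_restrict measurableSet_Iic,
      Iic_inter_Ioc_of_le ht.2]
  rw [meanDeviationKernel_smul_eq, intervalIntegral.integral_sub, intervalIntegral.integral_smul,
    hindicator, hmean, hu t ht]
  · simp only [smul_add, smul_sub, smul_smul, inv_mul_cancel₀ hT.ne', one_smul]
    abel
  · exact (hu'.indicator measurableSet_Iic).smul T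
  · exact hu'.continuousOn_smul (by fun_prop)

theorem stmt_6_general (n : ℕ) (φ : EuclideanSpace ℝ (Fin n) → ℝ) (hG : IsGFunction φ)
    (T : ℝ) (hT : 0 < T)
    (u u' : ℝ → EuclideanSpace ℝ (Fin n))
    (hu'int : IntervalIntegrable u' MeasureTheory.volume 0 T)
    (hAC : ∀ t ∈ Icc (0:ℝ) T, u t = u 0 + ∫ s in (0:ℝ)..t, u' s)
    (ubar : EuclideanSpace ℝ (Fin n))
    (hubar : ubar = (T⁻¹ : ℝ) • ∫ t in (0:ℝ)..T, u t) :
    ∀ t ∈ Icc (0:ℝ) T,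
      ENNReal.ofReal (φ (u t - ubar)) ≤
        ENNReal.ofReal (T⁻¹) *
          ∫⁻ r in Ioc (0:ℝ) T, ENNReal.ofReal (φ (T • u' r)) := by
  intro t ht
  have hkernel (r : ℝ) (hr : r ∈ Ioc 0 T) :
      φ (meanDeviationKernel T t r • u' r) ≤ φ (T • u' r) := by
    rw [← div_mul_cancel₀ (meanDeviationKernel T t r) hT.ne', ← smul_smul]
    refine hG.convexOn.apply_smul_le_of_abs_le_one hG.even ?_ _
    rw [abs_div, abs_of_pos hT, div_le_one hT]
    exact abs_meanDeviationKernel_le hr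
  calc ENNReal.ofReal (φ (u t - ubar))
        = ENNReal.ofReal (φ (⨍ r in Ioc 0 T, meanDeviationKernel T t r • u' r)) := by
        rw [hubar, sub_average_eq_integral_meanDeviationKernel_smul hT hu'int hAC ht, setAverage_eq,
          Real.volume_real_Ioc_of_le hT.le, sub_zero, intervalIntegral.integral_of_le hT.le]
    _ ≤ (volume (Ioc 0 T))⁻¹ *
          ∫⁻ r in Ioc 0 T, ENNReal.ofReal (φ (meanDeviationKernel T t r • u' r)) :=
        hG.convexOn.ofReal_map_set_average_le
          (continuousOn_univ.1 (hG.convexOn.continuousOn isOpen_univ)) hG.nonneg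
          (by simp [hT]) (by simp) (hu'int.meanDeviationKernel_smul T t).1
    _ ≤ ENNReal.ofReal T⁻¹ * ∫⁻ r in Ioc 0 T, ENNReal.ofReal (φ (T • u' r)) := by
        rw [Real.volume_Ioc, sub_zero, ← ENNReal.ofReal_inv_of_pos hT]
        exact mul_le_mul_right (setLIntegral_mono' measurableSet_Ioc fun r hr ↦
          ENNReal.ofReal_le_ofReal (hkernel r hr)) _

theorem stmt_6 (n : ℕ) (φ : EuclideanSpace ℝ (Fin n) → ℝ) (hG : IsGFunction φ)
    (T : ℝ) (hT : 0 < T)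
    (u u' : ℝ → EuclideanSpace ℝ (Fin n))
    (hu'int : IntervalIntegrable u' MeasureTheory.volume 0 T)
    (hAC : ∀ t ∈ Icc (0:ℝ) T, u t = u 0 + ∫ s in (0:ℝ)..t, u' s)
    (hper : u 0 = u T)
    (ubar : EuclideanSpace ℝ (Fin n))
    (hubar : ubar = (T⁻¹ : ℝ) • ∫ t in (0:ℝ)..T, u t) :
    ∀ t ∈ Icc (0:ℝ) T,
      ENNReal.ofReal (φ (u t - ubar)) ≤
        ENNReal.ofReal (T⁻¹) *
          ∫⁻ r in Ioc (0:ℝ) T, ENNReal.ofReal (φ (T • u' r)) :=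
  stmt_6_general n φ hG T hT u u' hu'int hAC ubar hubar
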